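/- Let m ≥ 3 be odd and k ≥ 2. The rewriting system R on the alphabet S = {x, y, y², …, y^{2k−1}} consisting of the rules (x,x) → ε, [x,y^k]_m → [y^k,x]_m, (y^a, y^{−a}) → ε for a ∈ ℤ_{2k}\{0}, and (y^a, y^b) → (y^{a+b}) for a, b ∈ ℤ_{2k}\{0} with a + b ≠ 0, is a complete (Noetherian and confluent) rewriting system for the monoid presented by these relations, namely QD_{m,k} = ⟨x, y | x² = y^{2k} = 1, [x,y^k]_m = [y^k,x]_m⟩. -/
import Mathlib


namespace Paper

/-- The alternating list `(a, b, a, b, ...)` of length `m`. -/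
def altList {α : Type*} (a b : α) : ℕ → List α
  | 0 => []
  | n + 1 => a :: altList b a n

/-- The alternating product `a b a ⋯` of length `m` in a monoid. -/
def altProd {G : Type*} [Monoid G] (a b : G) (m : ℕ) : G := (altList a b m).prod

variable {G : Type*} [Group G]

/-- The set of syllables of a generating set `X`: nontrivial powers of elements of `X`. -/
def Syll (X : Set G) : Set G := {s | ∃ x ∈ X, ∃ a : ℤ, s = x ^ a ∧ s ≠ 1}

/-- A syllabic word: a list all of whose entries are syllables. -/
def SylWord (X : Set G) (w : List G) : Prop := ∀ s ∈ w, s ∈ Syll X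

/-- The syllabic length of an element: minimal length of a syllabic word representing it. -/
noncomputable def sylLen (X : Set G) (g : G) : ℕ :=
  sInf {n | ∃ w : List G, SylWord X w ∧ w.prod = g ∧ w.length = n}

/-- A syllabic word is reduced if its length is the syllabic length of the element
it represents. -/
def Reduced (X : Set G) (w : List G) : Prop :=
  SylWord X w ∧ w.length = sylLen X w.prod

/-- Elementary M-operation of type I. -/
def MOpI (X : Set G) (w w' : List G) : Prop :=
  ∃ (w₁ w₂ : List G) (s t : G), s ∈ Syll X ∧ t ∈ Syll X ∧
    w = w₁ ++ [s, t] ++ w₂ ∧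
    ((s * t ∈ Syll X ∧ w' = w₁ ++ [s * t] ++ w₂) ∨ (s * t = 1 ∧ w' = w₁ ++ w₂))

/-- Elementary M-operation of type II. -/
def MOpII (X : Set G) (w w' : List G) : Prop :=
  ∃ (w₁ w₂ : List G) (s t : G) (m : ℕ), s ∈ Syll X ∧ t ∈ Syll X ∧ 2 ≤ m ∧
    altProd s t m = altProd t s m ∧ sylLen X (altProd s t m) = m ∧
    w = w₁ ++ altList s t m ++ w₂ ∧ w' = w₁ ++ altList t s m ++ w₂

/-- Elementary M-operation (of type I or type II). -/
def MOp (X : Set G) (w w' : List G) : Prop := MOpI X w w' ∨ MOpII X w w'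

/-- A syllabic word is M-reduced if its length cannot be shortened by any finite
sequence of elementary M-operations. -/
def MReduced (X : Set G) (w : List G) : Prop :=
  ∀ w', Relation.ReflTransGen (MOp X) w w' → ¬ w'.length < w.length

/-- Property D: a syllabic word is reduced iff it is M-reduced, and any two reduced
syllabic words representing the same element are connected by a finite sequence of
elementary M-operations of type II. -/
def PropertyD (X : Set G) : Prop :=
  (∀ w : List G, SylWord X w → (Reduced X w ↔ MReduced X w)) ∧
  (∀ w w' : List G, Reduced X w → Reduced X w' → w.prod = w'.prod →
    Relation.ReflTransGen (MOpII X) w w')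

/-- `(G, X)` is a marked group: `X` generates `G`. -/
def Marked (X : Set G) : Prop := Subgroup.closure X = ⊤

/-- `(G, X)` is a strongly marked group. -/
def StronglyMarked (X : Set G) : Prop :=
  Marked X ∧ (1 : G) ∉ X ∧
    ∀ x ∈ X, ∀ y ∈ X, ∀ a b : ℤ, x ^ a ≠ 1 → y ^ b ≠ 1 →
      (x ^ a * y ^ b ∈ Syll X ∨ x ^ a * y ^ b = 1) → x = y

/-- The data of a Dyer graph: a simplicial graph with edge labels `m ≥ 2` and vertex
labels `f ∈ ℕ_{≥2} ∪ {∞}` such that any edge with `m(e) ≠ 2` has both endpoints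
labelled `2`. -/
structure DyerData (V : Type*) where
  adj : V → V → Prop
  symm : ∀ u v, adj u v → adj v u
  loopless : ∀ v, ¬ adj v v
  m : V → V → ℕ
  m_symm : ∀ u v, m u v = m v u
  m_two_le : ∀ u v, adj u v → 2 ≤ m u v
  f : V → ℕ∞
  f_two_le : ∀ v, 2 ≤ f v
  dyer : ∀ u v, adj u v → m u v ≠ 2 → f u = 2 ∧ f v = 2

/-- The defining relators of the Dyer group of `Δ`. -/
def DyerData.rels {V : Type*} (Δ : DyerData V) : Set (FreeGroup V) :=
  {r | ∃ v, Δ.f v ≠ ⊤ ∧ r = (FreeGroup.of v) ^ (Δ.f v).toNat} ∪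
  {r | ∃ u v, Δ.adj u v ∧
    r = altProd (FreeGroup.of u) (FreeGroup.of v) (Δ.m u v) *
        (altProd (FreeGroup.of v) (FreeGroup.of u) (Δ.m u v))⁻¹}

/-- The Dyer group of the data `Δ`. -/
abbrev DyerGroup {V : Type*} (Δ : DyerData V) := PresentedGroup Δ.rels

/-- The standard generating set of a Dyer group. -/
def DyerGens {V : Type*} (Δ : DyerData V) : Set (DyerGroup Δ) :=
  Set.range (PresentedGroup.of (rels := Δ.rels))


/-- Defining relators of the quasi-Dyer group
`QD_{m,k} = ⟨x, y | x² = y^{2k} = 1, [x,y^k]_m = [y^k,x]_m⟩`. -/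
def qdRels (m k : ℕ) : Set (FreeGroup (Fin 2)) :=
  { (FreeGroup.of 0) ^ 2, (FreeGroup.of 1) ^ (2 * k),
    altProd (FreeGroup.of 0) ((FreeGroup.of 1) ^ k) m *
      (altProd ((FreeGroup.of 1) ^ k) (FreeGroup.of 0) m)⁻¹ }

/-- The quasi-Dyer group `QD_{m,k}`. -/
abbrev QDmk (m k : ℕ) := PresentedGroup (qdRels m k)

/-- The rewriting rules on the alphabet `{x, y, y², …, y^{2k-1}}`, encoded as natural
numbers: the letter `0` is `x` and a letter `a` with `1 ≤ a ≤ 2k-1` is `y^a`.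
Rules: `(x,x) → ε`; `[x,y^k]_m → [y^k,x]_m`; `(y^a, y^{-a}) → ε`; and
`(y^a, y^b) → (y^{a+b})` when `a + b ≢ 0 (mod 2k)`. -/
def qdRule (m k : ℕ) (u v : List ℕ) : Prop :=
  (u = [0, 0] ∧ v = []) ∨
  (u = altList 0 k m ∧ v = altList k 0 m) ∨
  (∃ a b : ℕ, 1 ≤ a ∧ a ≤ 2 * k - 1 ∧ 1 ≤ b ∧ b ≤ 2 * k - 1 ∧ u = [a, b] ∧
    (((a + b) % (2 * k) = 0 ∧ v = []) ∨
     ((a + b) % (2 * k) ≠ 0 ∧ v = [(a + b) % (2 * k)])))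

/-- One rewriting step. -/
def qdStep (m k : ℕ) (w w' : List ℕ) : Prop :=
  ∃ w₁ w₂ u v, qdRule m k u v ∧ w = w₁ ++ u ++ w₂ ∧ w' = w₁ ++ v ++ w₂

/-- Interpretation of a letter in `QD_{m,k}`. -/
noncomputable def qdLetter (m k : ℕ) (s : ℕ) : QDmk m k :=
  if s = 0 then PresentedGroup.of 0 else (PresentedGroup.of 1) ^ s


section Aux
variable {α : Type*}

theorem altList_length (a b : α) : ∀ n, (altList a b n).length = n
  | 0 => rfl
  | n + 1 => by simp [altList, altList_length b a n]

theorem altList_succ (a b : α) (n : ℕ) : altList a b (n + 1) = a :: altList b a n := rfl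

theorem altList_append (a b : α) : ∀ p q, altList a b (p + q) =
    altList a b p ++ (if p % 2 = 0 then altList a b q else altList b a q)
  | 0, q => by simp [altList]
  | p + 1, q => by
    have : p + 1 + q = (p + q) + 1 := by omega
    rw [this, altList_succ, altList_append b a p q, altList_succ]
    rcases Nat.even_or_odd p with h | h
    · have h1 : p % 2 = 0 := Nat.even_iff.mp h
      have h2 : (p + 1) % 2 ≠ 0 := by omega
      simp [h1, h2]
    · have h1 : p % 2 ≠ 0 := by have := Nat.odd_iff.mp h; omega
      have h2 : (p + 1) % 2 = 0 := by have := Nat.odd_iff.mp h; omega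
      simp [h1, h2]

theorem altList_snoc (a b : α) (n : ℕ) :
    altList a b (n + 1) = altList a b n ++ [if n % 2 = 0 then a else b] := by
  rw [altList_append a b n 1]
  rcases Nat.decEq (n % 2) 0 with h | h <;> simp_all [altList]

theorem altList_snoc_even (a b : α) (n : ℕ) (h : n % 2 = 0) :
    altList a b (n + 1) = altList a b n ++ [a] := by simp [altList_snoc, h]

theorem altList_snoc_odd (a b : α) (n : ℕ) (h : n % 2 = 1) :
    altList a b (n + 1) = altList a b n ++ [b] := by simp [altList_snoc, h]

theorem altList_pair (a b c d : α) : ∀ (n : ℕ) (e g : List α),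
    altList a b n = e ++ [c, d] ++ g → (c = a ∧ d = b) ∨ (c = b ∧ d = a)
  | 0, e, g => by
    intro h
    have := congrArg List.length h
    simp [altList_length] at this
  | 1, e, g => by
    intro h
    have := congrArg List.length h
    simp [altList_length] at this; omega
  | n + 2, [], g => by
    intro h
    simp [altList] at h
    exact Or.inl ⟨h.1.symm, h.2.1.symm⟩
  | n + 1, x :: e, g => by
    intro h
    rw [altList_succ] at h
    simp only [List.cons_append, List.cons.injEq] at h
    rcases altList_pair b a c d n e g (by simpa using h.2) with h' | h'
    · exact Or.inr h'
    · exact Or.inl h'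

end Aux

section Rules
variable {m k : ℕ}

theorem rule_xx : qdRule m k [0, 0] [] := Or.inl ⟨rfl, rfl⟩

theorem rule_braid : qdRule m k (altList 0 k m) (altList k 0 m) := Or.inr (Or.inl ⟨rfl, rfl⟩)

theorem rule_cancel {a b : ℕ} (ha1 : 1 ≤ a) (ha2 : a ≤ 2 * k - 1) (hb1 : 1 ≤ b)
    (hb2 : b ≤ 2 * k - 1) (hs : (a + b) % (2 * k) = 0) : qdRule m k [a, b] [] :=
  Or.inr (Or.inr ⟨a, b, ha1, ha2, hb1, hb2, rfl, Or.inl ⟨hs, rfl⟩⟩)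

theorem rule_merge {a b : ℕ} (ha1 : 1 ≤ a) (ha2 : a ≤ 2 * k - 1) (hb1 : 1 ≤ b)
    (hb2 : b ≤ 2 * k - 1) (hs : (a + b) % (2 * k) ≠ 0) :
    qdRule m k [a, b] [(a + b) % (2 * k)] :=
  Or.inr (Or.inr ⟨a, b, ha1, ha2, hb1, hb2, rfl, Or.inr ⟨hs, rfl⟩⟩)

theorem rule_kk (hk : 2 ≤ k) : qdRule m k [k, k] [] :=
  rule_cancel (by omega) (by omega) (by omega) (by omega)
    (by rw [show k + k = 2 * k by ring]; exact Nat.mul_mod_right 2 k ▸ Nat.mod_self (2*k))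

theorem step_of_rule {u v : List ℕ} (w₁ w₂ : List ℕ) (h : qdRule m k u v) :
    qdStep m k (w₁ ++ u ++ w₂) (w₁ ++ v ++ w₂) := ⟨w₁, w₂, u, v, h, rfl, rfl⟩

theorem step_context {w w' : List ℕ} (x y : List ℕ) (h : qdStep m k w w') :
    qdStep m k (x ++ w ++ y) (x ++ w' ++ y) := by
  obtain ⟨w₁, w₂, u, v, hr, rfl, rfl⟩ := h
  refine ⟨x ++ w₁, w₂ ++ y, u, v, hr, by simp, by simp⟩

theorem reach_context {w w' : List ℕ} (x y : List ℕ)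
    (h : Relation.ReflTransGen (qdStep m k) w w') :
    Relation.ReflTransGen (qdStep m k) (x ++ w ++ y) (x ++ w' ++ y) := by
  induction h with
  | refl => exact Relation.ReflTransGen.refl
  | tail _ hs ih => exact ih.tail (step_context x y hs)

end Rules
section Measure
variable {m k : ℕ}

/-- The termination measure: twice the number of `x`-letters plus the length. -/
def qdMu (w : List ℕ) : ℕ := 2 * w.count 0 + w.length

theorem qdMu_append (a b : List ℕ) : qdMu (a ++ b) = qdMu a + qdMu b := by
  simp [qdMu, List.count_append]; ring

theorem altList_count0 (hk : k ≠ 0) :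
    ∀ n, (altList 0 k n).count 0 = (n + 1) / 2 ∧ (altList k 0 n).count 0 = n / 2
  | 0 => by simp [altList]
  | n + 1 => by
    obtain ⟨h1, h2⟩ := altList_count0 hk n
    constructor
    · rw [altList_succ, List.count_cons]
      simp only [h2, beq_iff_eq, beq_self_eq_true, if_true, if_pos rfl]
      omega
    · rw [altList_succ, List.count_cons]
      simp only [h1, beq_iff_eq, if_neg hk]
      omega

theorem rule_mu_lt (hm : Odd m) (hk : 2 ≤ k) {u v : List ℕ} (h : qdRule m k u v) :
    qdMu v < qdMu u := by
  have hk0 : k ≠ 0 := by omega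
  rcases h with ⟨rfl, rfl⟩ | ⟨rfl, rfl⟩ | ⟨a, b, ha1, _, hb1, _, rfl, h⟩
  · simp [qdMu]
  · obtain ⟨h1, _⟩ := altList_count0 (k := k) hk0 m
    obtain ⟨_, h2⟩ := altList_count0 (k := k) hk0 m
    have hodd := Nat.odd_iff.mp hm
    simp only [qdMu, h1, h2, altList_length]
    omega
  · rcases h with ⟨_, rfl⟩ | ⟨hne, rfl⟩
    · simp [qdMu]
    · simp only [qdMu, List.count_cons, List.count_nil, List.length]
      have : a ≠ 0 := by omega
      have : b ≠ 0 := by omega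
      simp_all

theorem step_mu_lt (hm : Odd m) (hk : 2 ≤ k) {w w' : List ℕ} (h : qdStep m k w w') :
    qdMu w' < qdMu w := by
  obtain ⟨w₁, w₂, u, v, hr, rfl, rfl⟩ := h
  have := rule_mu_lt hm hk hr
  simp [qdMu_append]; omega

theorem qd_noetherian (hm : Odd m) (hk : 2 ≤ k) :
    ¬ ∃ f : ℕ → List ℕ, ∀ n, qdStep m k (f n) (f (n + 1)) := by
  rintro ⟨f, hf⟩
  have key : ∀ n, qdMu (f n) + n ≤ qdMu (f 0) := by
    intro n
    induction n with
    | zero => omega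
    | succ n ih => have := step_mu_lt hm hk (hf n); omega
  have := key (qdMu (f 0) + 1)
  omega

end Measure
section Chains
variable {m k : ℕ}

theorem reach_head {w w' t u v : List ℕ} (w₁ w₂ : List ℕ) (hr : qdRule m k u v)
    (hw : w = w₁ ++ u ++ w₂) (hw' : w' = w₁ ++ v ++ w₂)
    (h : Relation.ReflTransGen (qdStep m k) w' t) :
    Relation.ReflTransGen (qdStep m k) w t :=
  Relation.ReflTransGen.head ⟨w₁, w₂, u, v, hr, hw, hw'⟩ h

theorem chain1 (hk : 2 ≤ k) : ∀ (b a : ℕ), Relation.ReflTransGen (qdStep m k)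
    (altList k 0 (2*(a+b)+1) ++ altList k 0 (2*b)) (altList k 0 (2*a+1))
  | 0, a => by
    simp only [Nat.add_zero, Nat.mul_zero, altList, List.append_nil]
    exact Relation.ReflTransGen.refl
  | b + 1, a => by
    refine reach_head (w' := altList k 0 (2*(a+b)+2) ++ [] ++ (0 :: altList k 0 (2*b)))
      (altList k 0 (2*(a+b)+2)) (0 :: altList k 0 (2*b)) (rule_kk hk) ?_ rfl ?_
    · have key : 2*(a+(b+1))+1 = (2*(a+b)+2)+1 := by ring
      have e2 : altList k 0 (2*(b+1)) = k :: 0 :: altList k 0 (2*b) := by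
        have h3 : 2*(b+1) = (2*b)+1+1 := by ring
        rw [h3, altList_succ, altList_succ]
      rw [key, altList_snoc_even _ _ _ (by omega), e2]
      simp
    · refine reach_head (w' := altList k 0 (2*(a+b)+1) ++ [] ++ altList k 0 (2*b))
        (altList k 0 (2*(a+b)+1)) (altList k 0 (2*b)) rule_xx ?_ rfl ?_
      · rw [altList_snoc_odd _ _ _ (by omega)]
        simp
      · simpa using chain1 hk b a

theorem chain2 (hk : 2 ≤ k) : ∀ (b a : ℕ), Relation.ReflTransGen (qdStep m k)
    (altList 0 k (2*b) ++ altList k 0 (2*(a+b)+1)) (altList k 0 (2*a+1))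
  | 0, a => by
    simp only [Nat.add_zero, Nat.mul_zero, altList, List.nil_append]
    exact Relation.ReflTransGen.refl
  | b + 1, a => by
    refine reach_head (w' := altList 0 k (2*b+1) ++ [] ++ (0 :: altList k 0 (2*(a+b)+1)))
      (altList 0 k (2*b+1)) (0 :: altList k 0 (2*(a+b)+1)) (rule_kk hk) ?_ rfl ?_
    · have key : 2*(b+1) = (2*b+1)+1 := by ring
      have e2 : altList k 0 (2*(a+(b+1))+1) = k :: 0 :: altList k 0 (2*(a+b)+1) := by
        have h3 : 2*(a+(b+1))+1 = (2*(a+b)+1)+1+1 := by ring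
        rw [h3, altList_succ, altList_succ]
      rw [key, altList_snoc_odd _ _ _ (by omega), e2]
      simp
    · refine reach_head (w' := altList 0 k (2*b) ++ [] ++ altList k 0 (2*(a+b)+1))
        (altList 0 k (2*b)) (altList k 0 (2*(a+b)+1)) rule_xx ?_ rfl ?_
      · rw [altList_snoc_even _ _ _ (by omega)]
        simp
      · simpa using chain2 hk b a

/-- Join for the overlap `[0] ++ altList 0 k m` (A then B). -/
theorem joinAB (hk : 2 ≤ k) (c : ℕ) (hm : m = 2*c+1) :
    Relation.ReflTransGen (qdStep m k) ([0] ++ altList k 0 m) (altList k 0 (2*c)) := by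
  refine reach_head (w' := [] ++ altList k 0 m ++ [k]) [] [k] rule_braid ?_ rfl ?_
  · have : ([0] ++ altList k 0 m : List ℕ) = altList 0 k (m+1) := by
      rw [altList_succ]; rfl
    rw [this, altList_snoc_odd _ _ _ (by omega)]
    simp
  · refine reach_head (w' := altList k 0 (2*c)) (altList k 0 (2*c)) [] (rule_kk hk)
      ?_ (by simp) Relation.ReflTransGen.refl
    rw [hm, altList_snoc_even _ _ _ (by omega)]
    simp

/-- Join for the overlap `altList 0 k m ++ [0]` (B then A). -/
theorem joinBA (hk : 2 ≤ k) (c : ℕ) (hm : m = 2*c+1) :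
    Relation.ReflTransGen (qdStep m k) (altList k 0 m ++ [0]) (altList 0 k (2*c)) := by
  refine reach_head (w' := [k] ++ altList k 0 m ++ []) [k] [] rule_braid ?_ rfl ?_
  · have : (altList k 0 m ++ [0] : List ℕ) = altList k 0 (m+1) := by
      rw [altList_snoc_odd _ _ _ (by omega)]
    rw [this, show m+1 = m+1 from rfl, altList_succ]
    simp
  · refine reach_head (w' := altList 0 k (2*c)) [] (altList 0 k (2*c)) (rule_kk hk)
      ?_ (by simp) Relation.ReflTransGen.refl
    rw [hm]
    have e : altList k 0 (2*c+1) = k :: altList 0 k (2*c) := rfl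
    rw [e]
    simp

end Chains
section CP
variable {m k : ℕ}

theorem reach_of_eq {x y : List ℕ} (h : x = y) :
    Relation.ReflTransGen (qdStep m k) x y := h ▸ Relation.ReflTransGen.refl

theorem reach_single {u v : List ℕ} (h : qdRule m k u v) :
    Relation.ReflTransGen (qdStep m k) u v :=
  Relation.ReflTransGen.single ⟨[], [], u, v, h, by simp, by simp⟩

theorem rule_lhs_len (hm3 : 3 ≤ m) {u v : List ℕ} (h : qdRule m k u v) : 2 ≤ u.length := by
  rcases h with ⟨rfl, _⟩ | ⟨rfl, _⟩ | ⟨a, b, _, _, _, _, rfl, _⟩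
  · simp
  · rw [altList_length]; omega
  · simp

/-- Arithmetic helper. -/
theorem mod_helper {n a b c : ℕ} (hn : 0 < n) (hc : c < n) (hab : (a + b) % n = 0) :
    (a + (b + c) % n) % n = c := by
  rw [Nat.add_mod_mod, ← Nat.add_assoc, Nat.add_mod, hab, Nat.zero_add, Nat.mod_eq_of_lt hc,
    Nat.mod_eq_of_lt hc]

theorem mod_helper' {n a b c : ℕ} (hn : 0 < n) (ha : a < n) (hbc : (b + c) % n = 0) :
    ((a + b) % n + c) % n = a := by
  rw [Nat.mod_add_mod, Nat.add_assoc, Nat.add_mod, hbc, Nat.add_zero, Nat.mod_eq_of_lt ha,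
    Nat.mod_eq_of_lt ha]

end CP
section CPmain
variable {m k : ℕ}

theorem cp_contained (hm : Odd m) (hm3 : 3 ≤ m) (hk : 2 ≤ k) {u₂ r₁ r₂ : List ℕ}
    (e g : List ℕ) (hr₁ : qdRule m k (e ++ u₂ ++ g) r₁) (hr₂ : qdRule m k u₂ r₂) :
    ∃ c, Relation.ReflTransGen (qdStep m k) r₁ c ∧
         Relation.ReflTransGen (qdStep m k) (e ++ r₂ ++ g) c := by
  have hu₂ := rule_lhs_len hm3 hr₂
  rcases hr₁ with ⟨h1, rfl⟩ | ⟨h1, rfl⟩ | ⟨a, b, ha1, ha2, hb1, hb2, h1, hbr⟩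
  · -- u₁ = [0,0]
    have hlen := congrArg List.length h1
    simp at hlen
    have he : e = [] := List.eq_nil_of_length_eq_zero (by omega)
    have hg : g = [] := List.eq_nil_of_length_eq_zero (by omega)
    subst he; subst hg
    simp only [List.nil_append, List.append_nil] at h1
    rcases hr₂ with ⟨rfl, rfl⟩ | ⟨h2, rfl⟩ | ⟨a, b, ha1, _, _, _, rfl, _⟩
    · exact ⟨[], Relation.ReflTransGen.refl, reach_of_eq (by simp)⟩
    · rw [h2] at h1; have := congrArg List.length h1; rw [altList_length] at this
      simp at this; omega
    · simp only [List.cons.injEq] at h1; omega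
  · -- u₁ = altList 0 k m
    rcases hr₂ with ⟨rfl, rfl⟩ | ⟨h2, rfl⟩ | ⟨a, b, ha1, _, hb1, _, rfl, _⟩
    · rcases altList_pair 0 k 0 0 m e g h1.symm with ⟨_, hh⟩ | ⟨hh, _⟩ <;> omega
    · rw [h2] at h1
      have hlen := congrArg List.length h1
      simp [altList_length] at hlen
      have he : e = [] := List.eq_nil_of_length_eq_zero (by omega)
      have hg : g = [] := List.eq_nil_of_length_eq_zero (by omega)
      subst he; subst hg
      exact ⟨altList k 0 m, Relation.ReflTransGen.refl, reach_of_eq (by simp)⟩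
    · rcases altList_pair 0 k a b m e g h1.symm with ⟨hh, _⟩ | ⟨_, hh⟩ <;> omega
  · -- u₁ = [a,b]
    have hlen := congrArg List.length h1
    simp at hlen
    have he : e = [] := List.eq_nil_of_length_eq_zero (by omega)
    have hg : g = [] := List.eq_nil_of_length_eq_zero (by omega)
    subst he; subst hg
    simp only [List.nil_append, List.append_nil] at h1
    rcases hr₂ with ⟨rfl, rfl⟩ | ⟨h2, rfl⟩ | ⟨a', b', _, _, _, _, rfl, hbr'⟩
    · simp only [List.cons.injEq] at h1; omega
    · rw [h2] at h1; have := congrArg List.length h1; rw [altList_length] at this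
      simp at this; omega
    · simp only [List.cons.injEq] at h1
      obtain ⟨ha', hb', -⟩ := h1
      subst ha'; subst hb'
      rcases hbr with ⟨hz, rfl⟩ | ⟨hz, rfl⟩ <;> rcases hbr' with ⟨hz', rfl⟩ | ⟨hz', rfl⟩ <;>
        first
          | exact (hz' hz).elim
          | exact (hz hz').elim
          | exact ⟨_, Relation.ReflTransGen.refl, reach_of_eq (by simp)⟩

end CPmain
section CPstag
variable {m k : ℕ}

theorem cp_staggered (hm : Odd m) (hm3 : 3 ≤ m) (hk : 2 ≤ k) {f h' r₁ r₂ : List ℕ}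
    (e : List ℕ) (hf : f ≠ []) (hr₁ : qdRule m k (e ++ f) r₁)
    (hr₂ : qdRule m k (f ++ h') r₂) :
    ∃ c, Relation.ReflTransGen (qdStep m k) (r₁ ++ h') c ∧
         Relation.ReflTransGen (qdStep m k) (e ++ r₂) c := by
  obtain ⟨c, hc⟩ := hm
  have hn : 0 < 2 * k := by omega
  rcases hr₁ with ⟨h1, rfl⟩ | ⟨h1, rfl⟩ | ⟨a, b, ha1, ha2, hb1, hb2, h1, hbr⟩
  · -- u₁ = [0,0]
    rcases e with _ | ⟨x, _ | ⟨y, e''⟩⟩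
    · -- e = [], f = [0,0]
      simp only [List.nil_append] at h1
      subst h1
      rcases hr₂ with ⟨h2, rfl⟩ | ⟨h2, rfl⟩ | ⟨a, b, ha1, _, _, _, h2, _⟩
      · have : h' = [] := by simpa using h2
        subst this
        exact ⟨[], Relation.ReflTransGen.refl, reach_of_eq (by simp)⟩
      · exfalso
        obtain ⟨c2, rfl⟩ : ∃ c2, m = c2 + 2 := ⟨m - 2, by omega⟩
        have hu : altList 0 k (c2 + 2) = 0 :: k :: altList 0 k c2 := rfl
        rw [hu] at h2
        simp only [List.cons_append, List.cons.injEq] at h2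
        omega
      · simp only [List.cons_append, List.cons.injEq] at h2
        omega
    · -- e = [x], f = [0]
      have hx : x = 0 ∧ f = [0] := by
        have := h1
        simp only [List.cons_append, List.nil_append, List.cons.injEq] at this
        rcases f with _ | ⟨z, _ | ⟨w, f''⟩⟩
        · simp at this
        · simp_all
        · simp at this
      obtain ⟨rfl, rfl⟩ := hx
      rcases hr₂ with ⟨h2, rfl⟩ | ⟨h2, rfl⟩ | ⟨a, b, ha1, _, _, _, h2, _⟩
      · have : h' = [0] := by simpa using h2
        subst this
        exact ⟨[0], reach_of_eq (by simp), reach_of_eq (by simp)⟩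
      · -- [0] ++ h' = altList 0 k m
        have hu : altList 0 k m = 0 :: altList k 0 (2 * c) := by
          rw [hc]; rfl
        rw [hu] at h2
        have hh : h' = altList k 0 (2 * c) := by simpa using h2
        subst hh
        exact ⟨altList k 0 (2 * c), reach_of_eq (by simp), joinAB hk c hc⟩
      · simp only [List.cons_append, List.cons.injEq] at h2
        omega
    · -- e too long
      exfalso
      have hlen := congrArg List.length h1
      have hfl : 0 < f.length := List.length_pos_iff.mpr hf
      simp only [List.length_append, List.length_cons, List.length_nil] at hlen
      omega
  · -- u₁ = altList 0 k m
    rcases hr₂ with ⟨h2, rfl⟩ | ⟨h2, rfl⟩ | ⟨a, b, ha1, ha2, hb1, hb2, h2, hbr'⟩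
    · -- u₂ = [0,0]
      rcases f with _ | ⟨x, _ | ⟨y, f''⟩⟩
      · exact absurd rfl hf
      · -- f = [x]
        have hx : x = 0 ∧ h' = [0] := by simpa using h2
        obtain ⟨rfl, rfl⟩ := hx
        have hsnoc : altList 0 k m = altList 0 k (2 * c) ++ [0] := by
          rw [hc, altList_snoc_even _ _ _ (by omega)]
        rw [hsnoc] at h1
        obtain ⟨rfl, -⟩ := List.append_inj' h1 rfl
        exact ⟨altList 0 k (2 * c), joinBA hk c hc, reach_of_eq (by simp)⟩
      · -- f = [x, y, ...]
        exfalso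
        rcases altList_pair 0 k x y m e f'' (by simpa using h1.symm) with ⟨hh, hh'⟩ | ⟨hh, hh'⟩ <;>
          · simp only [List.cons_append, List.cons.injEq] at h2
            omega
    · -- u₂ = altList 0 k m (B-B overlap)
      have hdl : e.length + f.length = m := by
        have := congrArg List.length h1; simpa [altList_length] using this
      have hld : f.length + h'.length = m := by
        have := congrArg List.length h2; simpa [altList_length] using this
      have hfl : 1 ≤ f.length := List.length_pos_iff.mpr hf
      have ha1 := altList_append 0 k e.length f.length
      rw [hdl] at ha1
      obtain ⟨he, hf'⟩ := List.append_inj (h1.trans ha1) (by rw [altList_length])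
      have ha2 := altList_append 0 k f.length h'.length
      rw [hld] at ha2
      obtain ⟨hf2, hh'⟩ := List.append_inj (h2.trans ha2) (by rw [altList_length])
      by_cases hd : e.length % 2 = 0
      · -- even offset: genuine B-B critical pair
        have hlodd : ¬ f.length % 2 = 0 := by omega
        rw [if_neg hlodd] at hh'
        rw [if_pos hd] at hf'
        obtain ⟨bb, hbb⟩ : ∃ bb, e.length = 2 * bb := ⟨e.length / 2, by omega⟩
        obtain ⟨aa, haa⟩ : ∃ aa, f.length = 2 * aa + 1 := ⟨f.length / 2, by omega⟩
        have hm' : m = 2 * (aa + bb) + 1 := by omega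
        refine ⟨altList k 0 (2 * aa + 1), ?_, ?_⟩
        · have h1c := chain1 (m := m) hk bb aa
          rw [← hm'] at h1c
          rw [hh', show h'.length = 2 * bb by omega]
          exact h1c
        · have h2c := chain2 (m := m) hk bb aa
          rw [← hm'] at h2c
          rw [he, hbb]
          exact h2c
      · -- odd offset: impossible
        exfalso
        rw [if_neg hd] at hf'
        obtain ⟨l', hl'⟩ : ∃ l', f.length = l' + 1 := ⟨f.length - 1, by omega⟩
        have := hf'.symm.trans hf2
        rw [hl', altList_succ, altList_succ] at this
        simp only [List.cons.injEq] at this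
        omega
    · -- u₂ = [a,b]
      exfalso
      rcases f with _ | ⟨x, _ | ⟨y, f''⟩⟩
      · exact hf rfl
      · -- f = [x] : x = a and last letter of altList 0 k m is 0
        simp only [List.cons_append, List.nil_append, List.cons.injEq] at h2
        obtain ⟨rfl, -⟩ := h2
        have hsnoc : altList 0 k m = altList 0 k (2 * c) ++ [0] := by
          rw [hc, altList_snoc_even _ _ _ (by omega)]
        rw [hsnoc] at h1
        obtain ⟨-, hxx⟩ := List.append_inj' h1 rfl
        simp at hxx
        omega
      · rcases altList_pair 0 k x y m e f'' (by simpa using h1.symm) with ⟨hh, hh'⟩ | ⟨hh, hh'⟩ <;>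
          · simp only [List.cons_append, List.cons.injEq] at h2
            omega
  · -- u₁ = [a,b]
    rcases e with _ | ⟨x, _ | ⟨y, e''⟩⟩
    · -- e = [], f = [a,b]
      simp only [List.nil_append] at h1
      subst h1
      rcases hr₂ with ⟨h2, rfl⟩ | ⟨h2, rfl⟩ | ⟨a', b', ha1', ha2', hb1', hb2', h2, hbr'⟩
      · simp only [List.cons_append, List.cons.injEq] at h2; omega
      · exfalso
        obtain ⟨c2, rfl⟩ : ∃ c2, m = c2 + 2 := ⟨m - 2, by omega⟩
        have hu : altList 0 k (c2 + 2) = 0 :: k :: altList 0 k c2 := rfl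
        rw [hu] at h2
        simp only [List.cons_append, List.cons.injEq] at h2
        omega
      · simp only [List.cons_append, List.cons.injEq] at h2
        obtain ⟨hxa, hxb, h2⟩ := h2
        subst hxa; subst hxb
        have hh : h' = [] := by simpa using h2
        subst hh
        rcases hbr with ⟨hz, rfl⟩ | ⟨hz, rfl⟩ <;> rcases hbr' with ⟨hz', rfl⟩ | ⟨hz', rfl⟩ <;>
          first
            | exact (hz' hz).elim
            | exact (hz hz').elim
            | exact ⟨_, Relation.ReflTransGen.refl, reach_of_eq (by simp)⟩
    · -- e = [x] = [a], f = [b]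
      have hx : x = a ∧ f = [b] := by
        simp only [List.cons_append, List.nil_append, List.cons.injEq] at h1
        rcases f with _ | ⟨z, _ | ⟨w, f''⟩⟩
        · simp at h1
        · simp_all
        · simp at h1
      obtain ⟨rfl, rfl⟩ := hx
      rcases hr₂ with ⟨h2, rfl⟩ | ⟨h2, rfl⟩ | ⟨b', cc, hb1', hb2', hc1', hc2', h2, hbr'⟩
      · simp only [List.cons_append, List.nil_append, List.cons.injEq] at h2; omega
      · exfalso
        obtain ⟨c2, rfl⟩ : ∃ c2, m = c2 + 2 := ⟨m - 2, by omega⟩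
        have hu : altList 0 k (c2 + 2) = 0 :: k :: altList 0 k c2 := rfl
        rw [hu] at h2
        simp only [List.cons_append, List.nil_append, List.cons.injEq] at h2
        omega
      · -- the C-C critical pair
        simp only [List.cons_append, List.nil_append, List.cons.injEq] at h2
        obtain ⟨hbb', h2⟩ := h2
        subst hbb'
        have hh : h' = [cc] := by simpa using h2
        subst hh
        have hclt : cc < 2 * k := by omega
        have halt : x < 2 * k := by omega
        rcases hbr with ⟨hz, rfl⟩ | ⟨hz, rfl⟩ <;> rcases hbr' with ⟨hz', rfl⟩ | ⟨hz', rfl⟩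
        · -- both cancel: a = cc
          have hac : x = cc := by
            have h3 := mod_helper hn hclt hz
            rw [hz', Nat.add_zero, Nat.mod_eq_of_lt halt] at h3
            exact h3
          exact ⟨[cc], reach_of_eq (by simp), reach_of_eq (by simp [hac])⟩
        · -- (a+b) cancels, (b+cc) merges
          have hmm : (x + (b + cc) % (2 * k)) % (2 * k) = cc := mod_helper hn hclt hz
          refine ⟨[cc], reach_of_eq (by simp), ?_⟩
          have step := reach_single (m := m)
            (rule_merge (a := x) (b := (b + cc) % (2 * k)) ha1 ha2 (by omega)
              (by have := Nat.mod_lt (b + cc) hn; omega) (by rw [hmm]; omega))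
          rw [hmm] at step
          exact reach_of_eq (by simp) |>.trans step
        · -- (a+b) merges, (b+cc) cancels
          have hmm : ((x + b) % (2 * k) + cc) % (2 * k) = x := mod_helper' hn halt hz'
          refine ⟨[x], ?_, reach_of_eq (by simp)⟩
          have step := reach_single (m := m)
            (rule_merge (a := (x + b) % (2 * k)) (b := cc) (by omega)
              (by have := Nat.mod_lt (x + b) hn; omega) hc1' hc2' (by rw [hmm]; omega))
          rw [hmm] at step
          exact reach_of_eq (by simp) |>.trans step
        · -- both merge
          have e1 : ((x + b) % (2 * k) + cc) % (2 * k) = (x + b + cc) % (2 * k) :=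
            Nat.mod_add_mod (x + b) (2 * k) cc
          have e2 : (x + (b + cc) % (2 * k)) % (2 * k) = (x + b + cc) % (2 * k) := by
            rw [Nat.add_mod_mod, Nat.add_assoc]
          by_cases hS : (x + b + cc) % (2 * k) = 0
          · refine ⟨[], ?_, ?_⟩
            · have step := reach_single (m := m)
                (rule_cancel (a := (x + b) % (2 * k)) (b := cc) (by omega)
                  (by have := Nat.mod_lt (x + b) hn; omega) hc1' hc2' (by rw [e1, hS]))
              exact reach_of_eq (by simp) |>.trans step
            · have step := reach_single (m := m)
                (rule_cancel (a := x) (b := (b + cc) % (2 * k)) ha1 ha2 (by omega)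
                  (by have := Nat.mod_lt (b + cc) hn; omega) (by rw [e2, hS]))
              exact reach_of_eq (by simp) |>.trans step
          · refine ⟨[(x + b + cc) % (2 * k)], ?_, ?_⟩
            · have step := reach_single (m := m)
                (rule_merge (a := (x + b) % (2 * k)) (b := cc) (by omega)
                  (by have := Nat.mod_lt (x + b) hn; omega) hc1' hc2' (by rw [e1]; exact hS))
              rw [e1] at step
              exact reach_of_eq (by simp) |>.trans step
            · have step := reach_single (m := m)
                (rule_merge (a := x) (b := (b + cc) % (2 * k)) ha1 ha2 (by omega)
                  (by have := Nat.mod_lt (b + cc) hn; omega) (by rw [e2]; exact hS))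
              rw [e2] at step
              exact reach_of_eq (by simp) |>.trans step
    · -- e too long
      exfalso
      have hlen := congrArg List.length h1
      have hfl : 0 < f.length := List.length_pos_iff.mpr hf
      simp only [List.length_append, List.length_cons, List.length_nil] at hlen
      omega

end CPstag
section Confluence
variable {m k : ℕ}

theorem local_aux (hm : Odd m) (hm3 : 3 ≤ m) (hk : 2 ≤ k) (p t : List ℕ)
    {u₁ r₁ u₂ r₂ s₁ s₂ : List ℕ} (hr₁ : qdRule m k u₁ r₁) (hr₂ : qdRule m k u₂ r₂)
    (hsplit : u₁ ++ s₁ = t ++ (u₂ ++ s₂)) :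
    ∃ c, Relation.ReflTransGen (qdStep m k) (p ++ r₁ ++ s₁) c ∧
         Relation.ReflTransGen (qdStep m k) (p ++ t ++ r₂ ++ s₂) c := by
  rcases List.append_eq_append_iff.mp hsplit with ⟨z, hz1, hz2⟩ | ⟨f, hf1, hf2⟩
  · -- disjoint: t = u₁ ++ z, s₁ = z ++ u₂ ++ s₂
    subst hz1; subst hz2
    refine ⟨p ++ r₁ ++ z ++ r₂ ++ s₂, ?_, ?_⟩
    · exact Relation.ReflTransGen.single
        ⟨p ++ r₁ ++ z, s₂, u₂, r₂, hr₂, by simp, by simp⟩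
    · exact Relation.ReflTransGen.single
        ⟨p, z ++ r₂ ++ s₂, u₁, r₁, hr₁, by simp, by simp⟩
  · -- u₁ = t ++ f, u₂ ++ s₂ = f ++ s₁
    rcases eq_or_ne f [] with rfl | hf
    · -- adjacent: u₁ = t
      simp only [List.append_nil] at hf1
      subst hf1
      simp only [List.nil_append] at hf2
      refine ⟨p ++ r₁ ++ r₂ ++ s₂, ?_, ?_⟩
      · rw [← hf2]
        exact Relation.ReflTransGen.single
          ⟨p ++ r₁, s₂, u₂, r₂, hr₂, by simp, by simp⟩
      · exact Relation.ReflTransGen.single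
          ⟨p, r₂ ++ s₂, u₁, r₁, hr₁, by simp, by simp⟩
    · rcases List.append_eq_append_iff.mp hf2.symm with ⟨h', hh1, hh2⟩ | ⟨g, hg1, hg2⟩
      · -- staggered: u₂ = f ++ h', s₁ = h' ++ s₂
        subst hh1; subst hh2; subst hf1
        obtain ⟨c, hc1, hc2⟩ := cp_staggered hm hm3 hk t hf hr₁ hr₂
        refine ⟨p ++ c ++ s₂, ?_, ?_⟩
        · have := reach_context p s₂ hc1
          exact Relation.ReflTransGen.trans (reach_of_eq (by simp)) (this.trans (reach_of_eq (by simp)))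
        · have := reach_context p s₂ hc2
          exact Relation.ReflTransGen.trans (reach_of_eq (by simp)) (this.trans (reach_of_eq (by simp)))
      · -- contained: f = u₂ ++ g, s₂ = g ++ s₁
        subst hg1; subst hg2; subst hf1
        obtain ⟨c, hc1, hc2⟩ := cp_contained hm hm3 hk t g
          (by rw [← List.append_assoc] at hr₁; exact hr₁) hr₂
        refine ⟨p ++ c ++ s₁, ?_, ?_⟩
        · have := reach_context p s₁ hc1
          exact Relation.ReflTransGen.trans (reach_of_eq (by simp)) (this.trans (reach_of_eq (by simp)))
        · have := reach_context p s₁ hc2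
          exact Relation.ReflTransGen.trans (reach_of_eq (by simp)) (this.trans (reach_of_eq (by simp)))

theorem local_conf (hm : Odd m) (hm3 : 3 ≤ m) (hk : 2 ≤ k) {w v₁ v₂ : List ℕ}
    (h1 : qdStep m k w v₁) (h2 : qdStep m k w v₂) :
    ∃ t, Relation.ReflTransGen (qdStep m k) v₁ t ∧
         Relation.ReflTransGen (qdStep m k) v₂ t := by
  obtain ⟨p₁, s₁, u₁, r₁, hr₁, rfl, rfl⟩ := h1
  obtain ⟨p₂, s₂, u₂, r₂, hr₂, heq, rfl⟩ := h2
  rw [List.append_assoc, List.append_assoc] at heq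
  rcases List.append_eq_append_iff.mp heq with ⟨z, hz1, hz2⟩ | ⟨z, hz1, hz2⟩
  · -- p₂ = p₁ ++ z
    subst hz1
    obtain ⟨c, hc1, hc2⟩ := local_aux hm hm3 hk p₁ z hr₁ hr₂ hz2
    refine ⟨c, by simpa using hc1, ?_⟩
    have := hc2
    refine Relation.ReflTransGen.trans (reach_of_eq ?_) this
    simp
  · -- p₁ = p₂ ++ z
    subst hz1
    obtain ⟨c, hc1, hc2⟩ := local_aux hm hm3 hk p₂ z hr₂ hr₁ hz2
    refine ⟨c, ?_, by simpa using hc1⟩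
    refine Relation.ReflTransGen.trans (reach_of_eq ?_) hc2
    simp

theorem qd_confluent_aux (hm : Odd m) (hm3 : 3 ≤ m) (hk : 2 ≤ k) :
    ∀ (N : ℕ) (u : List ℕ), qdMu u ≤ N → ∀ v₁ v₂,
      Relation.ReflTransGen (qdStep m k) u v₁ →
      Relation.ReflTransGen (qdStep m k) u v₂ →
      ∃ t, Relation.ReflTransGen (qdStep m k) v₁ t ∧
           Relation.ReflTransGen (qdStep m k) v₂ t := by
  intro N
  induction N with
  | zero =>
    intro u hu v₁ v₂ h1 h2
    rcases h1.cases_head with rfl | ⟨c₁, hc₁, h1'⟩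
    · exact ⟨v₂, h2, Relation.ReflTransGen.refl⟩
    · exact absurd (step_mu_lt hm hk hc₁) (by omega)
  | succ N ih =>
    intro u hu v₁ v₂ h1 h2
    rcases h1.cases_head with rfl | ⟨c₁, hc₁, h1'⟩
    · exact ⟨v₂, h2, Relation.ReflTransGen.refl⟩
    rcases h2.cases_head with rfl | ⟨c₂, hc₂, h2'⟩
    · exact ⟨v₁, Relation.ReflTransGen.refl, h1⟩
    obtain ⟨d, hd₁, hd₂⟩ := local_conf hm hm3 hk hc₁ hc₂
    have m₁ : qdMu c₁ ≤ N := by have := step_mu_lt hm hk hc₁; omega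
    obtain ⟨e₁, he₁, he₂⟩ := ih c₁ m₁ v₁ d h1' hd₁
    have m₂ : qdMu c₂ ≤ N := by have := step_mu_lt hm hk hc₂; omega
    obtain ⟨t, ht₁, ht₂⟩ := ih c₂ m₂ v₂ e₁ h2' (hd₂.trans he₂)
    exact ⟨t, he₁.trans ht₂, ht₁⟩

theorem qd_confluent (hm : Odd m) (hm3 : 3 ≤ m) (hk : 2 ≤ k) (u v₁ v₂ : List ℕ)
    (h1 : Relation.ReflTransGen (qdStep m k) u v₁)
    (h2 : Relation.ReflTransGen (qdStep m k) u v₂) :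
    ∃ t, Relation.ReflTransGen (qdStep m k) v₁ t ∧
         Relation.ReflTransGen (qdStep m k) v₂ t :=
  qd_confluent_aux hm hm3 hk (qdMu u) u le_rfl v₁ v₂ h1 h2

end Confluence
section QMonSec

theorem step_nil {m k : ℕ} {u v : List ℕ} (h : qdRule m k u v) : qdStep m k u v :=
  ⟨[], [], u, v, h, by simp, by simp⟩

theorem eqv_context {m k : ℕ} (x y : List ℕ) {w w' : List ℕ}
    (h : Relation.EqvGen (qdStep m k) w w') :
    Relation.EqvGen (qdStep m k) (x ++ w ++ y) (x ++ w' ++ y) := by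
  induction h with
  | rel a b hab => exact Relation.EqvGen.rel _ _ (step_context x y hab)
  | refl a => exact Relation.EqvGen.refl _
  | symm a b _ ih => exact Relation.EqvGen.symm _ _ ih
  | trans a b c _ _ ih₁ ih₂ => exact Relation.EqvGen.trans _ _ _ ih₁ ih₂

theorem reach_eqv {m k : ℕ} {w w' : List ℕ} (h : Relation.ReflTransGen (qdStep m k) w w') :
    Relation.EqvGen (qdStep m k) w w' := by
  induction h with
  | refl => exact Relation.EqvGen.refl _
  | tail _ hs ih => exact Relation.EqvGen.trans _ _ _ ih (Relation.EqvGen.rel _ _ hs)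

/-- The setoid of words modulo the congruence generated by the rewriting rules. -/
def qdSetoid (m k : ℕ) : Setoid (List ℕ) :=
  ⟨Relation.EqvGen (qdStep m k), Relation.EqvGen.is_equivalence _⟩

/-- The quotient monoid. -/
def QMon (m k : ℕ) := Quotient (qdSetoid m k)

def QMon.mk (m k : ℕ) (w : List ℕ) : QMon m k := Quotient.mk (qdSetoid m k) w

theorem QMon.sound {m k : ℕ} {w w' : List ℕ} (h : Relation.EqvGen (qdStep m k) w w') :
    QMon.mk m k w = QMon.mk m k w' := Quotient.sound h

instance (m k : ℕ) : Monoid (QMon m k) where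
  mul := fun a b => Quotient.liftOn₂ a b (fun x y => QMon.mk m k (x ++ y)) (by
    intro x y x' y' hx hy
    apply QMon.sound
    refine Relation.EqvGen.trans _ (x' ++ y) _ ?_ ?_
    · simpa using eqv_context (m := m) (k := k) [] y hx
    · simpa using eqv_context (m := m) (k := k) x' [] hy)
  one := QMon.mk m k []
  mul_assoc := by
    intro a b c
    induction a using Quotient.ind
    induction b using Quotient.ind
    induction c using Quotient.ind
    exact congrArg (Quotient.mk _) (List.append_assoc _ _ _)
  one_mul := by
    intro a
    induction a using Quotient.ind
    exact congrArg (Quotient.mk _) (List.nil_append _)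
  mul_one := by
    intro a
    induction a using Quotient.ind
    exact congrArg (Quotient.mk _) (List.append_nil _)

theorem QMon.mk_mul {m k : ℕ} (a b : List ℕ) :
    QMon.mk m k a * QMon.mk m k b = QMon.mk m k (a ++ b) := rfl

theorem QMon.one_def {m k : ℕ} : (1 : QMon m k) = QMon.mk m k [] := rfl

theorem QMon.mk_pow {m k : ℕ} (s : ℕ) :
    (QMon.mk m k [s]) ^ (n : ℕ) = QMon.mk m k (List.replicate n s) := by
  induction n with
  | zero => rfl
  | succ n ih =>
    rw [pow_succ, ih, QMon.mk_mul, ← List.replicate_succ' ]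

theorem rep_reach {m k : ℕ} (hk : 2 ≤ k) :
    ∀ s : ℕ, 1 ≤ s → s ≤ 2 * k - 1 →
      Relation.ReflTransGen (qdStep m k) (List.replicate s 1) [s]
  | 0, h, _ => by omega
  | 1, _, _ => by simp; exact Relation.ReflTransGen.refl
  | s + 2, _, hs => by
    have ih := rep_reach (m := m) hk (s + 1) (by omega) (by omega)
    have h1 : List.replicate (s + 2) 1 = List.replicate (s + 1) 1 ++ [1] :=
      List.replicate_succ' ..
    have hctx := reach_context (m := m) (k := k) [] [1] ih
    simp only [List.nil_append] at hctx
    rw [h1]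
    refine Relation.ReflTransGen.trans hctx ?_
    have hmod : (s + 1 + 1) % (2 * k) = s + 2 := Nat.mod_eq_of_lt (by omega)
    have step := reach_single (m := m) (k := k)
      (rule_merge (a := s + 1) (b := 1) (by omega) (by omega) (by omega) (by omega)
        (by rw [hmod]; omega))
    rw [hmod] at step
    exact Relation.ReflTransGen.trans (reach_of_eq (by simp)) step

theorem mk_replicate_one {m k : ℕ} (hk : 2 ≤ k) (s : ℕ) (h1 : 1 ≤ s) (h2 : s ≤ 2 * k - 1) :
    QMon.mk m k (List.replicate s 1) = QMon.mk m k [s] :=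
  QMon.sound (reach_eqv (rep_reach hk s h1 h2))

theorem altList_map {α β : Type*} (f : α → β) (a b : α) :
    ∀ n, (altList a b n).map f = altList (f a) (f b) n
  | 0 => rfl
  | n + 1 => by rw [altList_succ, List.map_cons, altList_map f b a n, altList_succ]

theorem altProd_hom {M N : Type*} [Monoid M] [Monoid N] (φ : M →* N) (a b : M) (n : ℕ) :
    φ (altProd a b n) = altProd (φ a) (φ b) n := by
  rw [altProd, altProd, ← altList_map, ← List.prod_hom _ φ]

theorem altProd_mk {m k : ℕ} (a b : ℕ) :
    ∀ n, altProd (QMon.mk m k [a]) (QMon.mk m k [b]) n = QMon.mk m k (altList a b n)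
  | 0 => rfl
  | n + 1 => by
    rw [altProd, altList_succ, List.prod_cons, ← altProd, altProd_mk b a n, altList_succ,
      QMon.mk_mul]
    rfl

end QMonSec
section Units

/-- The unit corresponding to the letter `x`. -/
def u0 (m k : ℕ) : (QMon m k)ˣ where
  val := QMon.mk m k [0]
  inv := QMon.mk m k [0]
  val_inv := QMon.sound (Relation.EqvGen.rel _ _ (step_nil rule_xx))
  inv_val := QMon.sound (Relation.EqvGen.rel _ _ (step_nil rule_xx))

theorem cancel_pair {m k : ℕ} (hk : 2 ≤ k) {a b : ℕ} (ha1 : 1 ≤ a) (ha2 : a ≤ 2 * k - 1)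
    (hb1 : 1 ≤ b) (hb2 : b ≤ 2 * k - 1) (hs : a + b = 2 * k) : qdRule m k [a, b] [] :=
  rule_cancel ha1 ha2 hb1 hb2 (by rw [hs, Nat.mod_self])

/-- The unit corresponding to the letter `y`. -/
def u1 (m k : ℕ) (hk : 2 ≤ k) : (QMon m k)ˣ where
  val := QMon.mk m k [1]
  inv := QMon.mk m k [2 * k - 1]
  val_inv := QMon.sound (Relation.EqvGen.rel _ _
    (step_nil (cancel_pair hk (by omega) (by omega) (by omega) (by omega) (by omega))))
  inv_val := QMon.sound (Relation.EqvGen.rel _ _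
    (step_nil (cancel_pair hk (by omega) (by omega) (by omega) (by omega) (by omega))))

theorem rels_hold (m k : ℕ) (hm : Odd m) (hm3 : 3 ≤ m) (hk : 2 ≤ k) :
    ∀ r ∈ qdRels m k,
      FreeGroup.lift (fun i : Fin 2 => if i = 0 then u0 m k else u1 m k hk) r = 1 := by
  intro r hr
  rcases hr with rfl | rfl | rfl
  · -- x² = 1
    rw [map_pow, FreeGroup.lift_apply_of, if_pos rfl]
    apply Units.ext
    rw [Units.val_pow_eq_pow_val, Units.val_one, sq]
    exact QMon.sound (Relation.EqvGen.rel _ _ (step_nil rule_xx))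
  · -- y^{2k} = 1
    rw [map_pow, FreeGroup.lift_apply_of, if_neg (by decide)]
    apply Units.ext
    rw [Units.val_pow_eq_pow_val, Units.val_one]
    show (QMon.mk m k [1]) ^ (2 * k) = 1
    rw [QMon.mk_pow]
    have h1 : List.replicate (2 * k) 1 = List.replicate (2 * k - 1) 1 ++ [1] := by
      rw [← List.replicate_succ']
      congr 1
      omega
    apply QMon.sound
    rw [h1]
    apply reach_eqv
    have hctx := reach_context (m := m) (k := k) [] [1]
      (rep_reach hk (2 * k - 1) (by omega) (by omega))
    simp only [List.nil_append] at hctx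
    refine hctx.trans (Relation.ReflTransGen.trans
      (reach_of_eq (show ([2*k-1] ++ [1] : List ℕ) = [2*k-1, 1] from rfl))
      (reach_single (cancel_pair hk (by omega) (by omega) (by omega) (by omega) (by omega))))
  · -- braid relation
    rw [map_mul, map_inv]
    have key : FreeGroup.lift (fun i : Fin 2 => if i = 0 then u0 m k else u1 m k hk)
        (altProd (FreeGroup.of 0) (FreeGroup.of 1 ^ k) m) =
        FreeGroup.lift (fun i : Fin 2 => if i = 0 then u0 m k else u1 m k hk)
        (altProd (FreeGroup.of 1 ^ k) (FreeGroup.of 0) m) := by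
      rw [altProd_hom, altProd_hom, map_pow, FreeGroup.lift_apply_of, FreeGroup.lift_apply_of,
        if_pos rfl, if_neg (by decide)]
      apply Units.ext
      have hval : (((u1 m k hk) ^ k : (QMon m k)ˣ) : QMon m k) = QMon.mk m k [k] := by
        rw [Units.val_pow_eq_pow_val]
        show (QMon.mk m k [1]) ^ k = _
        rw [QMon.mk_pow, mk_replicate_one hk k (by omega) (by omega)]
      calc ((altProd (u0 m k) ((u1 m k hk) ^ k) m : (QMon m k)ˣ) : QMon m k)
          = altProd ((u0 m k : QMon m k)) (((u1 m k hk) ^ k : (QMon m k)ˣ) : QMon m k) m :=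
            by exact altProd_hom (Units.coeHom (QMon m k)) (u0 m k) ((u1 m k hk) ^ k) m
        _ = altProd (QMon.mk m k [0]) (QMon.mk m k [k]) m := by rw [hval]; rfl
        _ = QMon.mk m k (altList 0 k m) := altProd_mk _ _ m
        _ = QMon.mk m k (altList k 0 m) :=
            QMon.sound (Relation.EqvGen.rel _ _ (step_nil rule_braid))
        _ = altProd (QMon.mk m k [k]) (QMon.mk m k [0]) m := (altProd_mk _ _ m).symm
        _ = altProd (((u1 m k hk) ^ k : (QMon m k)ˣ) : QMon m k) ((u0 m k : QMon m k)) m := by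
            rw [hval]; rfl
        _ = ((altProd ((u1 m k hk) ^ k) (u0 m k) m : (QMon m k)ˣ) : QMon m k) :=
            by exact (altProd_hom (Units.coeHom (QMon m k)) ((u1 m k hk) ^ k) (u0 m k) m).symm
    rw [key, mul_inv_cancel]

end Units
section Final
variable {m k : ℕ}

theorem rel_one {r : FreeGroup (Fin 2)} (h : r ∈ qdRels m k) :
    PresentedGroup.mk (qdRels m k) r = 1 :=
  (QuotientGroup.eq_one_iff _).mpr (Subgroup.subset_normalClosure h)

theorem hx2 : (PresentedGroup.of 0 : QDmk m k) ^ 2 = 1 := by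
  have h := rel_one (m := m) (k := k) (r := (FreeGroup.of 0) ^ 2) (Set.mem_insert _ _)
  rw [map_pow] at h
  exact h

theorem hy2k : (PresentedGroup.of 1 : QDmk m k) ^ (2 * k) = 1 := by
  have h := rel_one (m := m) (k := k) (r := (FreeGroup.of 1) ^ (2 * k))
    (Set.mem_insert_iff.mpr (Or.inr (Set.mem_insert _ _)))
  rw [map_pow] at h
  exact h

theorem hbraid : altProd (PresentedGroup.of 0 : QDmk m k) ((PresentedGroup.of 1) ^ k) m =
    altProd ((PresentedGroup.of 1 : QDmk m k) ^ k) (PresentedGroup.of 0) m := by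
  have h := rel_one (m := m) (k := k)
    (r := altProd (FreeGroup.of 0) ((FreeGroup.of 1) ^ k) m *
      (altProd ((FreeGroup.of 1) ^ k) (FreeGroup.of 0) m)⁻¹)
    (Set.mem_insert_iff.mpr (Or.inr (Set.mem_insert_iff.mpr (Or.inr rfl))))
  rw [map_mul, map_inv, mul_inv_eq_one] at h
  rw [altProd_hom, altProd_hom, map_pow] at h
  exact h

theorem ypow_mod (n : ℕ) : (PresentedGroup.of 1 : QDmk m k) ^ n =
    (PresentedGroup.of 1 : QDmk m k) ^ (n % (2 * k)) := by
  conv_lhs => rw [← Nat.div_add_mod n (2 * k)]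
  rw [pow_add, pow_mul, hy2k, one_pow, one_mul]

theorem pi_rule (hk : 2 ≤ k) {u v : List ℕ} (h : qdRule m k u v) :
    (u.map (qdLetter m k)).prod = (v.map (qdLetter m k)).prod := by
  rcases h with ⟨rfl, rfl⟩ | ⟨rfl, rfl⟩ | ⟨a, b, ha1, ha2, hb1, hb2, rfl, hbr⟩
  · show (qdLetter m k 0) * ((qdLetter m k 0) * 1) = 1
    rw [mul_one, ← sq, qdLetter, if_pos rfl]
    exact hx2
  · rw [altList_map, altList_map]
    show altProd (qdLetter m k 0) (qdLetter m k k) m = altProd (qdLetter m k k) (qdLetter m k 0) m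
    rw [qdLetter, qdLetter, if_pos rfl, if_neg (by omega)]
    exact hbraid
  · have hql : ∀ s : ℕ, 1 ≤ s → qdLetter m k s = (PresentedGroup.of 1 : QDmk m k) ^ s := by
      intro s hs
      rw [qdLetter, if_neg (by omega)]
    rcases hbr with ⟨hz, rfl⟩ | ⟨hz, rfl⟩
    · show (qdLetter m k a) * ((qdLetter m k b) * 1) = 1
      rw [mul_one, hql a ha1, hql b hb1, ← pow_add, ypow_mod, hz, pow_zero]
    · show (qdLetter m k a) * ((qdLetter m k b) * 1) = (qdLetter m k ((a+b) % (2*k))) * 1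
      rw [mul_one, mul_one, hql a ha1, hql b hb1, hql _ (by omega), ← pow_add, ypow_mod]

theorem pi_step (hk : 2 ≤ k) {w w' : List ℕ} (h : qdStep m k w w') :
    (w.map (qdLetter m k)).prod = (w'.map (qdLetter m k)).prod := by
  obtain ⟨w₁, w₂, u, v, hr, rfl, rfl⟩ := h
  simp only [List.map_append, List.prod_append]
  rw [pi_rule hk hr]

/-- The comparison homomorphism from `QD_{m,k}` to the units of the quotient monoid. -/
noncomputable def qdHom (m k : ℕ) (hm : Odd m) (hm3 : 3 ≤ m) (hk : 2 ≤ k) :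
    QDmk m k →* (QMon m k)ˣ := PresentedGroup.toGroup (rels_hold m k hm hm3 hk)

theorem qdHom_interp (hm : Odd m) (hm3 : 3 ≤ m) (hk : 2 ≤ k) :
    ∀ u : List ℕ, (∀ s ∈ u, s ≤ 2 * k - 1) →
    ((qdHom m k hm hm3 hk ((u.map (qdLetter m k)).prod) : (QMon m k)ˣ) : QMon m k)
      = QMon.mk m k u := by
  intro u hu
  induction u with
  | nil => rw [List.map_nil, List.prod_nil, map_one, Units.val_one]; rfl
  | cons s t ih =>
    have hs := hu s (by simp)
    have ht : ∀ x ∈ t, x ≤ 2 * k - 1 := fun x hx => hu x (by simp [hx])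
    rw [List.map_cons, List.prod_cons, map_mul, Units.val_mul, ih ht]
    have hlet : ((qdHom m k hm hm3 hk (qdLetter m k s) : (QMon m k)ˣ) : QMon m k)
        = QMon.mk m k [s] := by
      by_cases h0 : s = 0
      · subst h0
        rw [qdLetter, if_pos rfl, qdHom, PresentedGroup.toGroup.of, if_pos rfl]
        rfl
      · rw [qdLetter, if_neg h0, map_pow, qdHom, PresentedGroup.toGroup.of, if_neg (by decide),
          Units.val_pow_eq_pow_val]
        show (QMon.mk m k [1]) ^ s = _
        rw [QMon.mk_pow, mk_replicate_one hk s (by omega) hs]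
    rw [hlet, QMon.mk_mul]
    rfl

theorem qd_surj (hk : 2 ≤ k) (g : QDmk m k) :
    ∃ w : List ℕ, (∀ s ∈ w, s ≤ 2 * k - 1) ∧ (w.map (qdLetter m k)).prod = g := by
  obtain ⟨z, rfl⟩ := PresentedGroup.mk_surjective (qdRels m k) g
  refine FreeGroup.induction_on
    (C := fun z => ∃ w : List ℕ, (∀ s ∈ w, s ≤ 2 * k - 1) ∧
      (w.map (qdLetter m k)).prod = PresentedGroup.mk (qdRels m k) z) z ?_ ?_ ?_ ?_
  · exact ⟨[], by simp, by simp⟩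
  · intro x
    fin_cases x
    · refine ⟨[0], by simp, ?_⟩
      show (qdLetter m k 0) * 1 = _
      rw [mul_one, qdLetter, if_pos rfl]
      rfl
    · refine ⟨[1], by simp <;> omega, ?_⟩
      show (qdLetter m k 1) * 1 = _
      rw [mul_one, qdLetter, if_neg (by omega), pow_one]
      rfl
  · intro x _
    fin_cases x
    · refine ⟨[0], by simp, ?_⟩
      show (qdLetter m k 0) * 1 = _
      rw [mul_one, qdLetter, if_pos rfl, map_inv]
      have hinv : (PresentedGroup.of 0 : QDmk m k)⁻¹ = PresentedGroup.of 0 :=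
        inv_eq_of_mul_eq_one_right (by rw [← sq]; exact hx2)
      show PresentedGroup.of 0 = ((PresentedGroup.mk (qdRels m k)) (FreeGroup.of 0))⁻¹
      rw [← hinv]
      rfl
    · refine ⟨[2 * k - 1], by simp <;> omega, ?_⟩
      show (qdLetter m k (2 * k - 1)) * 1 = _
      rw [mul_one, qdLetter, if_neg (by omega), map_inv]
      have hinv : (PresentedGroup.of 1 : QDmk m k)⁻¹ = (PresentedGroup.of 1) ^ (2 * k - 1) :=
        inv_eq_of_mul_eq_one_right (by
          rw [← pow_succ', show 2 * k - 1 + 1 = 2 * k by omega]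
          exact hy2k)
      show (PresentedGroup.of 1 : QDmk m k) ^ (2 * k - 1) =
        ((PresentedGroup.mk (qdRels m k)) (FreeGroup.of 1))⁻¹
      rw [← hinv]
      rfl
  · rintro x y ⟨w₁, hw₁, hp₁⟩ ⟨w₂, hw₂, hp₂⟩
    refine ⟨w₁ ++ w₂, ?_, ?_⟩
    · intro s hs
      rcases List.mem_append.mp hs with h | h
      · exact hw₁ s h
      · exact hw₂ s h
    · rw [List.map_append, List.prod_append, hp₁, hp₂, map_mul]

theorem eqv_pi (hk : 2 ≤ k) {u v : List ℕ} (h : Relation.EqvGen (qdStep m k) u v) :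
    (u.map (qdLetter m k)).prod = (v.map (qdLetter m k)).prod := by
  induction h with
  | rel a b hab => exact pi_step hk hab
  | refl a => rfl
  | symm a b _ ih => exact ih.symm
  | trans a b c _ _ ih1 ih2 => exact ih1.trans ih2

end Final


theorem statement_13 (m k : ℕ) (hm : Odd m) (hm3 : 3 ≤ m) (hk : 2 ≤ k) :
    -- Noetherian
    (¬ ∃ f : ℕ → List ℕ, ∀ n, qdStep m k (f n) (f (n + 1))) ∧
    -- confluent
    (∀ u v₁ v₂ : List ℕ,
      Relation.ReflTransGen (qdStep m k) u v₁ →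
      Relation.ReflTransGen (qdStep m k) u v₂ →
      ∃ w, Relation.ReflTransGen (qdStep m k) v₁ w ∧
           Relation.ReflTransGen (qdStep m k) v₂ w) ∧
    -- it is a rewriting system for the monoid QD_{m,k}: the interpretation map from the
    -- free monoid on the alphabet is surjective, and identifies two words exactly when
    -- they are equivalent under the congruence generated by the rules
    (∀ g : QDmk m k, ∃ w : List ℕ, (∀ s ∈ w, s ≤ 2 * k - 1) ∧
      (w.map (qdLetter m k)).prod = g) ∧
    (∀ u v : List ℕ, (∀ s ∈ u, s ≤ 2 * k - 1) → (∀ s ∈ v, s ≤ 2 * k - 1) →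
      ((u.map (qdLetter m k)).prod = (v.map (qdLetter m k)).prod ↔
        Relation.EqvGen (qdStep m k) u v)) := by
  refine ⟨qd_noetherian hm hk, qd_confluent hm hm3 hk, fun g => qd_surj hk g, ?_⟩
  intro u v hu hv
  constructor
  · intro h
    have h1 := qdHom_interp hm hm3 hk u hu
    have h2 := qdHom_interp hm hm3 hk v hv
    rw [h] at h1
    exact Quotient.exact (h1.symm.trans h2)
  · exact eqv_pi hk

end Paper
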